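/- Let Ω ⊆ ℂ be open, let û : Ω → ℝ and α : Ω → ℂ be smooth, and let λ ∈ ℂ with |λ| = 1. Define U(μ) := [[û_z/4, −(√2/2)μ⁻¹e^{û/2}], [(√2/2)μ⁻¹αe^{−û/2}, −û_z/4]] and V(μ) := [[−û_z̄/4, −(√2/2)μ·ᾱ·e^{−û/2}], [(√2/2)μe^{û/2}, û_z̄/4]] for μ ∈ {λ, −iλ}. Let F, G : Ω → GL(2, ℂ) be smooth with F_z = F·U(λ), F_z̄ = F·V(λ), G_z = G·U(−iλ), G_z̄ = G·V(−iλ), and set φ := Fσ₃F⁻¹ and ψ := Gσ₃G⁻¹ with σ₃ = diag(1, −1). Then on Ω: tr(φ_z·φ_z) = 4λ⁻²α and tr(ψ_z·ψ_z) = −4λ⁻²α, so that tr(φ_z·φ_z) + tr(ψ_z·ψ_z) = 0; moreover, if F(w) and G(w) are unitary matrices for every w ∈ Ω, then (1/2)·tr(φ_z·(φ_z)*) = (1/2)·tr(ψ_z·(ψ_z)*) = e^û + |α|² e^{−û}, where * denotes conjugate transpose. -/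

import Mathlib

open Complex ComplexConjugate Matrix

/-- Wirtinger derivative `g_z = (∂ₓg - i ∂_y g)/2`. -/
noncomputable def wderivZ (g : ℂ → ℂ) (w : ℂ) : ℂ :=
  (fderiv ℝ g w 1 - Complex.I * fderiv ℝ g w Complex.I) / 2

/-- Wirtinger derivative `g_z̄ = (∂ₓg + i ∂_y g)/2`. -/
noncomputable def wderivZbar (g : ℂ → ℂ) (w : ℂ) : ℂ :=
  (fderiv ℝ g w 1 + Complex.I * fderiv ℝ g w Complex.I) / 2

/-- Entrywise Wirtinger derivative `g_z` on matrix-valued maps. -/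
noncomputable def mderivZ (g : ℂ → Matrix (Fin 2) (Fin 2) ℂ) (w : ℂ) :
    Matrix (Fin 2) (Fin 2) ℂ :=
  Matrix.of fun i j => wderivZ (fun z => g z i j) w

/-- Entrywise Wirtinger derivative `g_z̄` on matrix-valued maps. -/
noncomputable def mderivZbar (g : ℂ → Matrix (Fin 2) (Fin 2) ℂ) (w : ℂ) :
    Matrix (Fin 2) (Fin 2) ℂ :=
  Matrix.of fun i j => wderivZbar (fun z => g z i j) w

/-- The Pauli matrix `σ₃ = diag(1, −1)`. -/
def sigma3 : Matrix (Fin 2) (Fin 2) ℂ := !![1, 0; 0, -1]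

/-- The coefficient `U(μ)` of the Maurer–Cartan form. -/
noncomputable def Umat (uh : ℂ → ℝ) (α : ℂ → ℂ) (μ : ℂ) (w : ℂ) :
    Matrix (Fin 2) (Fin 2) ℂ :=
  !![wderivZ (fun z => (uh z : ℂ)) w / 4,
      -((Real.sqrt 2 : ℂ) / 2) * μ⁻¹ * (Real.exp (uh w / 2) : ℂ);
     ((Real.sqrt 2 : ℂ) / 2) * μ⁻¹ * α w * (Real.exp (-(uh w) / 2) : ℂ),
      -(wderivZ (fun z => (uh z : ℂ)) w) / 4]

/-- The coefficient `V(μ)` of the Maurer–Cartan form. -/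
noncomputable def Vmat (uh : ℂ → ℝ) (α : ℂ → ℂ) (μ : ℂ) (w : ℂ) :
    Matrix (Fin 2) (Fin 2) ℂ :=
  !![-(wderivZbar (fun z => (uh z : ℂ)) w) / 4,
      -((Real.sqrt 2 : ℂ) / 2) * μ * conj (α w) * (Real.exp (-(uh w) / 2) : ℂ);
     ((Real.sqrt 2 : ℂ) / 2) * μ * (Real.exp (uh w / 2) : ℂ),
      wderivZbar (fun z => (uh z : ℂ)) w / 4]

/-! Since `F_z = F U` and `(F⁻¹)_z = -F⁻¹ F_z F⁻¹`, the derivative of `φ = F σ₃ F⁻¹` is the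
conjugate `F ⁅U, σ₃⁆ F⁻¹`. Traces are conjugation invariant, and for unitary `F` so is
`X ↦ tr (X Xᴴ)`, so everything reduces to the off-diagonal matrix `⁅U(μ), σ₃⁆` with entries
`√2 μ⁻¹ e^{û/2}` and `√2 μ⁻¹ α e^{-û/2}`. Passing from `μ = λ` to `μ = -iλ` multiplies `μ⁻²` by `-1`
and leaves `|μ| = 1`. -/

open Filter Topology

section Wirtinger

variable {f g : ℂ → ℂ} {w : ℂ}

lemma wderivZ_congr_of_eventuallyEq (h : f =ᶠ[𝓝 w] g) : wderivZ f w = wderivZ g w := by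
  rw [wderivZ, wderivZ, h.fderiv_eq]

lemma wderivZ_const (c : ℂ) : wderivZ (fun _ => c) w = 0 := by
  simp [wderivZ]

lemma wderivZ_add (hf : DifferentiableAt ℝ f w) (hg : DifferentiableAt ℝ g w) :
    wderivZ (fun z => f z + g z) w = wderivZ f w + wderivZ g w := by
  simp only [wderivZ, fderiv_fun_add hf hg, _root_.add_apply]
  ring

lemma wderivZ_mul (hf : DifferentiableAt ℝ f w) (hg : DifferentiableAt ℝ g w) :
    wderivZ (fun z => f z * g z) w = wderivZ f w * g w + f w * wderivZ g w := by
  simp only [wderivZ, fderiv_fun_mul hf hg, _root_.add_apply,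
    _root_.smul_apply, smul_eq_mul]
  ring

end Wirtinger

section MatrixWirtinger

variable {A B : ℂ → Matrix (Fin 2) (Fin 2) ℂ} {w : ℂ}

lemma mderivZ_congr_of_eventuallyEq (h : A =ᶠ[𝓝 w] B) : mderivZ A w = mderivZ B w := by
  ext i j
  exact wderivZ_congr_of_eventuallyEq (h.mono fun z hz => by simp only [hz])

lemma mderivZ_const (C : Matrix (Fin 2) (Fin 2) ℂ) : mderivZ (fun _ => C) w = 0 := by
  ext i j
  exact wderivZ_const _

lemma differentiableAt_mul_apply (hA : ∀ i j, DifferentiableAt ℝ (fun z => A z i j) w)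
    (hB : ∀ i j, DifferentiableAt ℝ (fun z => B z i j) w) (i j : Fin 2) :
    DifferentiableAt ℝ (fun z => (A z * B z) i j) w := by
  simp only [Matrix.mul_apply, Fin.sum_univ_two]
  exact ((hA i 0).mul (hB 0 j)).add ((hA i 1).mul (hB 1 j))

lemma mderivZ_mul (hA : ∀ i j, DifferentiableAt ℝ (fun z => A z i j) w)
    (hB : ∀ i j, DifferentiableAt ℝ (fun z => B z i j) w) :
    mderivZ (fun z => A z * B z) w = mderivZ A w * B w + A w * mderivZ B w := by
  ext i j
  simp only [mderivZ, Matrix.of_apply, Matrix.add_apply, Matrix.mul_apply, Fin.sum_univ_two]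
  rw [wderivZ_add ((hA i 0).fun_mul (hB 0 j)) ((hA i 1).fun_mul (hB 1 j)),
    wderivZ_mul (hA i 0) (hB 0 j), wderivZ_mul (hA i 1) (hB 1 j)]
  ring

lemma differentiableAt_inv_apply (hA : ∀ i j, DifferentiableAt ℝ (fun z => A z i j) w)
    (hunit : IsUnit (A w)) (i j : Fin 2) :
    DifferentiableAt ℝ (fun z => (A z)⁻¹ i j) w := by
  have hdet : DifferentiableAt ℝ (fun z => (A z).det) w := by
    simp only [Matrix.det_fin_two]
    exact ((hA 0 0).mul (hA 1 1)).sub ((hA 0 1).mul (hA 1 0))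
  have hdet_inv := hdet.inv ((Matrix.isUnit_iff_isUnit_det _).mp hunit).ne_zero
  simp only [Matrix.inv_def, Matrix.smul_apply, Ring.inverse_eq_inv', smul_eq_mul,
    Matrix.adjugate_fin_two]
  fin_cases i <;> fin_cases j
  · exact hdet_inv.mul (hA 1 1)
  · exact hdet_inv.mul (hA 0 1).neg
  · exact hdet_inv.mul (hA 1 0).neg
  · exact hdet_inv.mul (hA 0 0)

lemma mderivZ_inv (hA : ∀ i j, DifferentiableAt ℝ (fun z => A z i j) w)
    (hunit : ∀ᶠ z in 𝓝 w, IsUnit (A z)) :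
    mderivZ (fun z => (A z)⁻¹) w = -((A w)⁻¹ * mderivZ A w * (A w)⁻¹) := by
  have hdet : IsUnit (A w).det := (Matrix.isUnit_iff_isUnit_det _).mp hunit.self_of_nhds
  have hA_mul_inv : mderivZ A w * (A w)⁻¹ + A w * mderivZ (fun z => (A z)⁻¹) w = 0 := by
    rw [← mderivZ_mul hA (differentiableAt_inv_apply hA hunit.self_of_nhds),
      ← mderivZ_const (1 : Matrix (Fin 2) (Fin 2) ℂ) (w := w)]
    exact mderivZ_congr_of_eventuallyEq <| hunit.mono fun z hz =>
      Matrix.mul_nonsing_inv _ ((Matrix.isUnit_iff_isUnit_det _).mp hz)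
  calc mderivZ (fun z => (A z)⁻¹) w
      = (A w)⁻¹ * (A w * mderivZ (fun z => (A z)⁻¹) w) :=
        (Matrix.nonsing_inv_mul_cancel_left _ _ hdet).symm
    _ = -((A w)⁻¹ * mderivZ A w * (A w)⁻¹) := by
        rw [eq_neg_of_add_eq_zero_right hA_mul_inv]; noncomm_ring

lemma mderivZ_conj {U : Matrix (Fin 2) (Fin 2) ℂ} (C : Matrix (Fin 2) (Fin 2) ℂ)
    (hA : ∀ i j, DifferentiableAt ℝ (fun z => A z i j) w)
    (hunit : ∀ᶠ z in 𝓝 w, IsUnit (A z)) (hAz : mderivZ A w = A w * U) :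
    mderivZ (fun z => A z * C * (A z)⁻¹) w = A w * ⁅U, C⁆ * (A w)⁻¹ := by
  have hdet : IsUnit (A w).det := (Matrix.isUnit_iff_isUnit_det _).mp hunit.self_of_nhds
  have hC : ∀ i j, DifferentiableAt ℝ (fun _ : ℂ => C i j) w :=
    fun _ _ => differentiableAt_const _
  rw [mderivZ_mul (differentiableAt_mul_apply hA hC)
      (differentiableAt_inv_apply hA hunit.self_of_nhds),
    mderivZ_mul hA hC, mderivZ_const, mderivZ_inv hA hunit, hAz,
    Matrix.nonsing_inv_mul_cancel_left _ _ hdet, Ring.lie_def]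
  noncomm_ring

end MatrixWirtinger

section Trace

variable {n R : Type*} [Fintype n] [DecidableEq n] [CommRing R] {P : Matrix n n R}

lemma trace_conj_mul_conj (hP : IsUnit P) (A B : Matrix n n R) :
    trace (P * A * P⁻¹ * (P * B * P⁻¹)) = trace (A * B) := by
  have hdet : IsUnit P.det := (Matrix.isUnit_iff_isUnit_det _).mp hP
  calc trace (P * A * P⁻¹ * (P * B * P⁻¹)) = trace (P * (A * (P⁻¹ * P) * B) * P⁻¹) := by
        simp only [Matrix.mul_assoc]
    _ = trace (A * B) := by rw [Matrix.nonsing_inv_mul _ hdet, Matrix.mul_one, trace_conj hP]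

lemma conjTranspose_conj_of_conjTranspose_mul_self [StarRing R] (hP : Pᴴ * P = 1)
    (A : Matrix n n R) : (P * A * P⁻¹)ᴴ = P * Aᴴ * P⁻¹ := by
  rw [Matrix.inv_eq_left_inv hP]
  simp only [Matrix.conjTranspose_mul, Matrix.conjTranspose_conjTranspose, Matrix.mul_assoc]

end Trace

section OffDiagonal

variable (b c : ℂ)

lemma trace_offDiag_mul_self :
    trace (!![0, b; c, 0] * !![0, b; c, 0]) = 2 * b * c := by
  simp [Matrix.trace_fin_two]
  ring

lemma conjTranspose_offDiag :
    (!![0, b; c, 0])ᴴ = !![0, conj c; conj b, 0] := by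
  ext i j
  fin_cases i <;> fin_cases j <;> simp

lemma trace_offDiag_mul_conjTranspose :
    trace (!![0, b; c, 0] * (!![0, b; c, 0])ᴴ) = ((‖b‖ ^ 2 + ‖c‖ ^ 2 : ℝ) : ℂ) := by
  simp [conjTranspose_offDiag, Matrix.trace_fin_two, Complex.mul_conj,
    Complex.normSq_eq_norm_sq]

end OffDiagonal

lemma lie_Umat_sigma3 (uh : ℂ → ℝ) (α : ℂ → ℂ) (μ w : ℂ) :
    ⁅Umat uh α μ w, sigma3⁆
      = !![0, (Real.sqrt 2 : ℂ) * μ⁻¹ * (Real.exp (uh w / 2) : ℂ);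
           (Real.sqrt 2 : ℂ) * μ⁻¹ * α w * (Real.exp (-(uh w) / 2) : ℂ), 0] := by
  ext i j
  fin_cases i <;> fin_cases j <;>
    simp [Ring.lie_def, Umat, sigma3] <;> ring

lemma trace_lie_Umat_sigma3_sq (uh : ℂ → ℝ) (α : ℂ → ℂ) (μ w : ℂ) :
    trace (⁅Umat uh α μ w, sigma3⁆ * ⁅Umat uh α μ w, sigma3⁆) = 4 * μ⁻¹ ^ 2 * α w := by
  have hsqrt : (Real.sqrt 2 : ℂ) ^ 2 = 2 := by
    norm_cast; exact Real.sq_sqrt zero_le_two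
  have hexp : (Real.exp (uh w / 2) : ℂ) * (Real.exp (-(uh w) / 2) : ℂ) = 1 := by
    rw [← Complex.ofReal_mul, ← Real.exp_add, ← add_div, add_neg_cancel, zero_div, Real.exp_zero,
      Complex.ofReal_one]
  rw [lie_Umat_sigma3, trace_offDiag_mul_self]
  linear_combination (2 * μ⁻¹ ^ 2 * α w * (Real.exp (uh w / 2) : ℂ) *
    (Real.exp (-(uh w) / 2) : ℂ)) * hsqrt + 4 * μ⁻¹ ^ 2 * α w * hexp

lemma trace_lie_Umat_sigma3_mul_conjTranspose (uh : ℂ → ℝ) (α : ℂ → ℂ) {μ : ℂ}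
    (hμ : ‖μ‖ = 1) (w : ℂ) :
    trace (⁅Umat uh α μ w, sigma3⁆ * (⁅Umat uh α μ w, sigma3⁆)ᴴ)
      = 2 * ((Real.exp (uh w) + ‖α w‖ ^ 2 * Real.exp (-(uh w)) : ℝ) : ℂ) := by
  have hsqrt : Real.sqrt 2 ^ 2 = 2 := Real.sq_sqrt zero_le_two
  have hexp (x : ℝ) : Real.exp (x / 2) ^ 2 = Real.exp x := by
    rw [← Real.exp_nat_mul]; ring_nf
  rw [lie_Umat_sigma3, trace_offDiag_mul_conjTranspose, ← Complex.ofReal_ofNat,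
    ← Complex.ofReal_mul]
  congr 1
  simp only [norm_mul, norm_inv, hμ, inv_one, mul_one, Complex.norm_real,
    Real.norm_of_nonneg (Real.sqrt_nonneg 2), Real.norm_of_nonneg (Real.exp_pos _).le]
  rw [mul_pow, mul_pow, mul_pow, hsqrt, hexp, hexp]
  ring

section Frame

variable {uh : ℂ → ℝ} {α : ℂ → ℂ} {μ w : ℂ} {F : ℂ → Matrix (Fin 2) (Fin 2) ℂ}

lemma trace_sq_mderivZ_frame (hF : ∀ i j, DifferentiableAt ℝ (fun z => F z i j) w)
    (hunit : ∀ᶠ z in 𝓝 w, IsUnit (F z)) (hFz : mderivZ F w = F w * Umat uh α μ w) :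
    trace (mderivZ (fun z => F z * sigma3 * (F z)⁻¹) w
      * mderivZ (fun z => F z * sigma3 * (F z)⁻¹) w) = 4 * μ⁻¹ ^ 2 * α w := by
  rw [mderivZ_conj sigma3 hF hunit hFz, trace_conj_mul_conj hunit.self_of_nhds,
    trace_lie_Umat_sigma3_sq]

lemma trace_mderivZ_frame_mul_conjTranspose
    (hF : ∀ i j, DifferentiableAt ℝ (fun z => F z i j) w)
    (hunit : ∀ᶠ z in 𝓝 w, IsUnit (F z)) (hFz : mderivZ F w = F w * Umat uh α μ w)
    (hμ : ‖μ‖ = 1) (hFw : (F w)ᴴ * F w = 1) :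
    (1 / 2 : ℂ) * trace (mderivZ (fun z => F z * sigma3 * (F z)⁻¹) w
      * (mderivZ (fun z => F z * sigma3 * (F z)⁻¹) w)ᴴ)
      = ((Real.exp (uh w) + ‖α w‖ ^ 2 * Real.exp (-(uh w)) : ℝ) : ℂ) := by
  rw [mderivZ_conj sigma3 hF hunit hFz, conjTranspose_conj_of_conjTranspose_mul_self hFw,
    trace_conj_mul_conj hunit.self_of_nhds, trace_lie_Umat_sigma3_mul_conjTranspose uh α hμ]
  ring

end Frame

theorem stmt12_general (Ω : Set ℂ) (hΩ : IsOpen Ω)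
    (uh : ℂ → ℝ) (α : ℂ → ℂ) (lam : ℂ)
    (hlam : ‖lam‖ = 1)
    (F G : ℂ → Matrix (Fin 2) (Fin 2) ℂ)
    (hFsmooth : ∀ i j, ContDiffOn ℝ (⊤ : ℕ∞) (fun w => F w i j) Ω)
    (hGsmooth : ∀ i j, ContDiffOn ℝ (⊤ : ℕ∞) (fun w => G w i j) Ω)
    (hFinv : ∀ w ∈ Ω, IsUnit (F w))
    (hGinv : ∀ w ∈ Ω, IsUnit (G w))
    (hFz : ∀ w ∈ Ω, mderivZ F w = F w * Umat uh α lam w)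
    (hGz : ∀ w ∈ Ω, mderivZ G w = G w * Umat uh α (-Complex.I * lam) w) :
    (∀ w ∈ Ω,
      Matrix.trace (mderivZ (fun z => F z * sigma3 * (F z)⁻¹) w
          * mderivZ (fun z => F z * sigma3 * (F z)⁻¹) w) = 4 * lam⁻¹ ^ 2 * α w ∧
      Matrix.trace (mderivZ (fun z => G z * sigma3 * (G z)⁻¹) w
          * mderivZ (fun z => G z * sigma3 * (G z)⁻¹) w) = -(4 * lam⁻¹ ^ 2 * α w) ∧
      Matrix.trace (mderivZ (fun z => F z * sigma3 * (F z)⁻¹) w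
          * mderivZ (fun z => F z * sigma3 * (F z)⁻¹) w)
        + Matrix.trace (mderivZ (fun z => G z * sigma3 * (G z)⁻¹) w
          * mderivZ (fun z => G z * sigma3 * (G z)⁻¹) w) = 0) ∧
    ((∀ w ∈ Ω, (F w)ᴴ * F w = 1 ∧ (G w)ᴴ * G w = 1) →
      ∀ w ∈ Ω,
        (1 / 2 : ℂ) * Matrix.trace (mderivZ (fun z => F z * sigma3 * (F z)⁻¹) w
            * (mderivZ (fun z => F z * sigma3 * (F z)⁻¹) w)ᴴ)
          = ((Real.exp (uh w) + ‖α w‖ ^ 2 * Real.exp (-(uh w)) : ℝ) : ℂ) ∧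
        (1 / 2 : ℂ) * Matrix.trace (mderivZ (fun z => G z * sigma3 * (G z)⁻¹) w
            * (mderivZ (fun z => G z * sigma3 * (G z)⁻¹) w)ᴴ)
          = ((Real.exp (uh w) + ‖α w‖ ^ 2 * Real.exp (-(uh w)) : ℝ) : ℂ)) := by
  have hFd : ∀ w ∈ Ω, ∀ i j, DifferentiableAt ℝ (fun z => F z i j) w := fun w hw i j =>
    ((hFsmooth i j).contDiffAt (hΩ.mem_nhds hw)).differentiableAt (by simp)
  have hGd : ∀ w ∈ Ω, ∀ i j, DifferentiableAt ℝ (fun z => G z i j) w := fun w hw i j =>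
    ((hGsmooth i j).contDiffAt (hΩ.mem_nhds hw)).differentiableAt (by simp)
  have hFunit : ∀ w ∈ Ω, ∀ᶠ z in 𝓝 w, IsUnit (F z) := fun w hw =>
    eventually_of_mem (hΩ.mem_nhds hw) hFinv
  have hGunit : ∀ w ∈ Ω, ∀ᶠ z in 𝓝 w, IsUnit (G z) := fun w hw =>
    eventually_of_mem (hΩ.mem_nhds hw) hGinv
  have hnorm : ‖-Complex.I * lam‖ = 1 := by simp [hlam]
  have hsq : (-Complex.I * lam)⁻¹ ^ 2 = -lam⁻¹ ^ 2 := by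
    rw [mul_inv, mul_pow, inv_neg, Complex.inv_I, neg_neg, Complex.I_sq]; ring
  refine ⟨fun w hw => ?_, fun hU w hw => ⟨?_, ?_⟩⟩
  · have hφ := trace_sq_mderivZ_frame (hFd w hw) (hFunit w hw) (hFz w hw)
    have hψ := trace_sq_mderivZ_frame (hGd w hw) (hGunit w hw) (hGz w hw)
    rw [hsq] at hψ
    exact ⟨hφ, by rw [hψ]; ring, by rw [hφ, hψ]; ring⟩
  · exact trace_mderivZ_frame_mul_conjTranspose (hFd w hw) (hFunit w hw) (hFz w hw) hlam
      (hU w hw).1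
  · exact trace_mderivZ_frame_mul_conjTranspose (hGd w hw) (hGunit w hw) (hGz w hw) hnorm
      (hU w hw).2

theorem stmt12 (Ω : Set ℂ) (hΩ : IsOpen Ω)
    (uh : ℂ → ℝ) (α : ℂ → ℂ) (lam : ℂ)
    (huh : ContDiffOn ℝ (⊤ : ℕ∞) uh Ω)
    (hα : ContDiffOn ℝ (⊤ : ℕ∞) α Ω)
    (hlam : ‖lam‖ = 1)
    (F G : ℂ → Matrix (Fin 2) (Fin 2) ℂ)
    (hFsmooth : ∀ i j, ContDiffOn ℝ (⊤ : ℕ∞) (fun w => F w i j) Ω)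
    (hGsmooth : ∀ i j, ContDiffOn ℝ (⊤ : ℕ∞) (fun w => G w i j) Ω)
    (hFinv : ∀ w ∈ Ω, IsUnit (F w))
    (hGinv : ∀ w ∈ Ω, IsUnit (G w))
    (hFz : ∀ w ∈ Ω, mderivZ F w = F w * Umat uh α lam w)
    (hFzbar : ∀ w ∈ Ω, mderivZbar F w = F w * Vmat uh α lam w)
    (hGz : ∀ w ∈ Ω, mderivZ G w = G w * Umat uh α (-Complex.I * lam) w)
    (hGzbar : ∀ w ∈ Ω, mderivZbar G w = G w * Vmat uh α (-Complex.I * lam) w) :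
    (∀ w ∈ Ω,
      Matrix.trace (mderivZ (fun z => F z * sigma3 * (F z)⁻¹) w
          * mderivZ (fun z => F z * sigma3 * (F z)⁻¹) w) = 4 * lam⁻¹ ^ 2 * α w ∧
      Matrix.trace (mderivZ (fun z => G z * sigma3 * (G z)⁻¹) w
          * mderivZ (fun z => G z * sigma3 * (G z)⁻¹) w) = -(4 * lam⁻¹ ^ 2 * α w) ∧
      Matrix.trace (mderivZ (fun z => F z * sigma3 * (F z)⁻¹) w
          * mderivZ (fun z => F z * sigma3 * (F z)⁻¹) w)
        + Matrix.trace (mderivZ (fun z => G z * sigma3 * (G z)⁻¹) w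
          * mderivZ (fun z => G z * sigma3 * (G z)⁻¹) w) = 0) ∧
    ((∀ w ∈ Ω, (F w)ᴴ * F w = 1 ∧ (G w)ᴴ * G w = 1) →
      ∀ w ∈ Ω,
        (1 / 2 : ℂ) * Matrix.trace (mderivZ (fun z => F z * sigma3 * (F z)⁻¹) w
            * (mderivZ (fun z => F z * sigma3 * (F z)⁻¹) w)ᴴ)
          = ((Real.exp (uh w) + ‖α w‖ ^ 2 * Real.exp (-(uh w)) : ℝ) : ℂ) ∧
        (1 / 2 : ℂ) * Matrix.trace (mderivZ (fun z => G z * sigma3 * (G z)⁻¹) w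
            * (mderivZ (fun z => G z * sigma3 * (G z)⁻¹) w)ᴴ)
          = ((Real.exp (uh w) + ‖α w‖ ^ 2 * Real.exp (-(uh w)) : ℝ) : ℂ)) :=
  stmt12_general Ω hΩ uh α lam hlam F G hFsmooth hGsmooth hFinv hGinv hFz hGz
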